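/- For nonnegative integers n and i with i <= n: the i-th divided difference of x^n with respect to the interpolation points x_1 = -1, x_2 = -q, ..., x_{i+1} = -q^i equals (-1)^{n-i} [n choose i]_q, i.e., h_{n-i}(-1, -q, ..., -q^i) = (-1)^{n-i} [n choose i]_q. -/

import Mathlib

open Finset

variable {F : Type*} [Field F]

/-- `(q;q)_n = (1-q)(1-q^2)...(1-q^n)` -/
def qfac (q : F) (n : ℕ) : F := ∏ j ∈ Finset.range n, (1 - q ^ (j + 1))

/-- `(z;q)_k = (1-z)(1-zq)...(1-zq^{k-1})` -/
def qpoch (z q : F) (k : ℕ) : F := ∏ j ∈ Finset.range k, (1 - z * q ^ j)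

/-- Gaussian binomial coefficient `[n choose k]_q` -/
def qbinom (q : F) (n k : ℕ) : F := qfac q n / (qfac q k * qfac q (n - k))

/-- Sum over weakly increasing `m`-tuples `lo ≤ i_1 ≤ ... ≤ i_m ≤ n` of
`∏_j q^{i_j}/(1-q^{i_j})` (equal to `1` when `m = 0`). -/
def chainSum (q : F) (lo n m : ℕ) : F :=
  ∑ c ∈ Finset.univ.filter (fun c : Fin m → Fin (n + 1) =>
      (∀ j k : Fin m, j ≤ k → c j ≤ c k) ∧ ∀ j, lo ≤ (c j : ℕ)),
    ∏ j, q ^ (c j : ℕ) / (1 - q ^ (c j : ℕ))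

/-- Complete homogeneous symmetric function `h_m` of the variables
`x lo, x (lo+1), ..., x n`. -/
def hSum {R : Type*} [CommRing R] (x : ℕ → R) (lo n m : ℕ) : R :=
  ∑ c ∈ Finset.univ.filter (fun c : Fin m → Fin (n + 1) =>
      (∀ j k : Fin m, j ≤ k → c j ≤ c k) ∧ ∀ j, lo ≤ (c j : ℕ)),
    ∏ j, x (c j : ℕ)

/-
The complete homogeneous polynomial `h_m(x_lo, …, x_n)` splits according to whether the
smallest index is `lo` or not:
`h_m(x_lo, …, x_n) = h_m(x_(lo+1), …, x_n) + x_lo · h_(m-1)(x_lo, …, x_n)`.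
For `x_j = q ^ j` this recursion is the `q`-Pascal rule, which gives
`h_m(q^lo, …, q^(lo+d)) = q^(lo·m) [m + d choose d]_q`; the sign `(-1)^(n-i)` comes from
homogeneity.
-/

lemma Fin.monotone_cons_iff {α : Type*} [Preorder α] {m : ℕ} {a : α} {d : Fin m → α} :
    Monotone (Fin.cons a d : Fin (m + 1) → α) ↔ (∀ j, a ≤ d j) ∧ Monotone d := by
  refine ⟨fun h => ⟨fun j => by simpa using h (Fin.zero_le j.succ),
    fun j k hjk => by simpa using h (Fin.succ_le_succ_iff.2 hjk)⟩, ?_⟩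
  rintro ⟨ha, hd⟩ j k hjk
  induction j using Fin.cases with
  | zero => induction k using Fin.cases with
    | zero => exact le_rfl
    | succ k => simpa using ha k
  | succ j => induction k using Fin.cases with
    | zero => exact absurd hjk (by simp)
    | succ k => simpa using hd (Fin.succ_le_succ_iff.1 hjk)

section Chains

def chains (lo n m : ℕ) : Finset (Fin m → Fin (n + 1)) :=
  univ.filter fun c => (∀ j k : Fin m, j ≤ k → c j ≤ c k) ∧ ∀ j, lo ≤ (c j : ℕ)

variable {lo n m : ℕ}

lemma mem_chains {c : Fin m → Fin (n + 1)} :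
    c ∈ chains lo n m ↔ Monotone c ∧ ∀ j, lo ≤ (c j : ℕ) := by
  simp only [chains, mem_filter, mem_univ, true_and, Monotone]

lemma mem_chains_succ {c : Fin (m + 1) → Fin (n + 1)} :
    c ∈ chains lo n (m + 1) ↔ Monotone c ∧ lo ≤ (c 0 : ℕ) := by
  rw [mem_chains]
  exact and_congr_right fun hc => ⟨fun h => h 0, fun h j => h.trans (hc (Fin.zero_le j))⟩

lemma chains_eq_empty (h : n < lo) : chains lo n (m + 1) = ∅ :=
  eq_empty_of_forall_notMem fun c hc => by
    have := (c 0).isLt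
    have := (mem_chains_succ.1 hc).2
    omega

lemma filter_chains_lt :
    (chains lo n (m + 1)).filter (fun c => lo < (c 0 : ℕ)) = chains (lo + 1) n (m + 1) := by
  ext c
  simp only [mem_filter, mem_chains_succ, and_assoc]
  exact and_congr_right fun _ => by omega

lemma filter_chains_not_lt (h : lo ≤ n) :
    (chains lo n (m + 1)).filter (fun c => ¬ lo < (c 0 : ℕ)) =
      (chains lo n m).map ⟨Fin.cons ⟨lo, by omega⟩, Fin.cons_right_injective _⟩ := by
  ext c
  simp only [mem_filter, mem_chains_succ, mem_map, mem_chains, Function.Embedding.coeFn_mk]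
  constructor
  · rintro ⟨⟨hc, h0⟩, h0'⟩
    have hc0 : c 0 = ⟨lo, by omega⟩ := Fin.ext <| le_antisymm (not_lt.1 h0') h0
    rw [← Fin.cons_self_tail c, hc0, Fin.monotone_cons_iff] at hc
    exact ⟨Fin.tail c, ⟨hc.2, fun j => hc.1 j⟩, by rw [← hc0, Fin.cons_self_tail]⟩
  · rintro ⟨d, ⟨hd, hlo⟩, rfl⟩
    exact ⟨⟨Fin.monotone_cons_iff.2 ⟨hlo, hd⟩, by simp⟩, by simp⟩

end Chains

section hSum

variable {R : Type*} [CommRing R] (x : ℕ → R) (lo n m : ℕ)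

lemma hSum_eq_sum_chains : hSum x lo n m = ∑ c ∈ chains lo n m, ∏ j, x (c j) := rfl

lemma hSum_zero : hSum x lo n 0 = 1 := by
  simp [hSum_eq_sum_chains, chains]

lemma hSum_const_mul (a : R) : hSum (fun j => a * x j) lo n m = a ^ m * hSum x lo n m := by
  simp only [hSum_eq_sum_chains, mul_sum, prod_mul_distrib, prod_const, card_univ, Fintype.card_fin]

lemma hSum_of_lt {lo n : ℕ} (h : n < lo) : hSum x lo n (m + 1) = 0 := by
  rw [hSum_eq_sum_chains, chains_eq_empty h, sum_empty]

lemma hSum_succ {lo n : ℕ} (h : lo ≤ n) :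
    hSum x lo n (m + 1) = hSum x (lo + 1) n (m + 1) + x lo * hSum x lo n m := by
  rw [hSum_eq_sum_chains, ← sum_filter_add_sum_filter_not _ (fun c => lo < (c 0 : ℕ)),
    filter_chains_lt, filter_chains_not_lt h, sum_map, hSum_eq_sum_chains, hSum_eq_sum_chains,
    mul_sum]
  simp [Fin.prod_univ_succ]

end hSum

section QAnalogues

variable {q : F} {n : ℕ}

lemma qfac_zero (q : F) : qfac q 0 = 1 := prod_range_zero _

lemma qfac_succ (q : F) (n : ℕ) : qfac q (n + 1) = qfac q n * (1 - q ^ (n + 1)) :=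
  prod_range_succ _ _

lemma qfac_ne_zero (hq : ∀ j ∈ Icc 1 n, q ^ j ≠ 1) : qfac q n ≠ 0 :=
  prod_ne_zero_iff.2 fun j hj =>
    sub_ne_zero.2 (hq (j + 1) (mem_Icc.2 ⟨by omega, by simpa using hj⟩)).symm

lemma qfac_ne_zero_of_le (h : qfac q n ≠ 0) {k : ℕ} (hk : k ≤ n) : qfac q k ≠ 0 :=
  ne_zero_of_dvd_ne_zero h (prod_dvd_prod_of_subset _ _ _ (range_subset_range.2 hk))

lemma one_sub_pow_succ_ne_zero (h : qfac q n ≠ 0) {k : ℕ} (hk : k + 1 ≤ n) :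
    1 - q ^ (k + 1) ≠ 0 :=
  right_ne_zero_of_mul (qfac_succ q k ▸ qfac_ne_zero_of_le h hk)

lemma qbinom_zero_right (h : qfac q n ≠ 0) : qbinom q n 0 = 1 := by
  rw [qbinom, qfac_zero, one_mul, Nat.sub_zero, div_self h]

lemma qbinom_self (h : qfac q n ≠ 0) : qbinom q n n = 1 := by
  rw [qbinom, Nat.sub_self, qfac_zero, mul_one, div_self h]

lemma qbinom_succ_succ {m k : ℕ} (h : qfac q (m + k + 1) ≠ 0) :
    qbinom q (m + k + 2) (k + 1) =
      q ^ (m + 1) * qbinom q (m + k + 1) k + qbinom q (m + k + 1) (k + 1) := by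
  simp only [qbinom, show m + k + 2 - (k + 1) = m + 1 by omega,
    show m + k + 1 - k = m + 1 by omega, show m + k + 1 - (k + 1) = m by omega,
    qfac_succ q (m + k + 1), qfac_succ q m, qfac_succ q k]
  have := qfac_ne_zero_of_le h (k := m) (by omega)
  have := qfac_ne_zero_of_le h (k := k) (by omega)
  have := one_sub_pow_succ_ne_zero h (k := m) (by omega)
  have := one_sub_pow_succ_ne_zero h (k := k) (by omega)
  field_simp
  ring

end QAnalogues

lemma hSum_pow_eq_qbinom (q : F) {m d : ℕ} (h : qfac q (m + d) ≠ 0) (lo : ℕ) :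
    hSum (q ^ ·) lo (lo + d) m = q ^ (lo * m) * qbinom q (m + d) d := by
  induction m generalizing d lo with
  | zero => rw [hSum_zero, mul_zero, pow_zero, one_mul, zero_add, qbinom_self (by simpa using h)]
  | succ m ihm => induction d generalizing lo with
    | zero =>
      have ih := ihm (d := 0) (qfac_ne_zero_of_le h (by omega)) lo
      simp only [add_zero] at h ih ⊢
      rw [hSum_succ _ _ le_rfl, hSum_of_lt _ _ (Nat.lt_succ_self lo), ih, qbinom_zero_right h,
        qbinom_zero_right (qfac_ne_zero_of_le h (Nat.le_succ m))]
      ring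
    | succ d ihd =>
      rw [hSum_succ _ _ (by omega), show lo + (d + 1) = lo + 1 + d by omega,
        ihd (qfac_ne_zero_of_le h (by omega)), ← show lo + (d + 1) = lo + 1 + d by omega,
        ihm (qfac_ne_zero_of_le h (by omega)), show m + 1 + (d + 1) = m + d + 2 by omega,
        show m + 1 + d = m + d + 1 by omega, ← add_assoc,
        qbinom_succ_succ (qfac_ne_zero_of_le h (by omega))]
      ring

theorem divided_difference_power (q : F) (n i : ℕ) (hin : i ≤ n)
    (hq : ∀ j ∈ Finset.Icc 1 n, q ^ j ≠ 1) :
    hSum (fun j => -q ^ j) 0 i (n - i) = (-1) ^ (n - i) * qbinom q n i := by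
  have h : qfac q (n - i + i) ≠ 0 := by rw [Nat.sub_add_cancel hin]; exact qfac_ne_zero hq
  have key := hSum_pow_eq_qbinom q h 0
  rw [zero_add, zero_mul, pow_zero, one_mul, Nat.sub_add_cancel hin] at key
  simp_rw [neg_eq_neg_one_mul (q ^ _), hSum_const_mul, key]
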